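/- As formal power series in w: prod_{d >= 1} (1 - w^d)^{-N-bar(d,q)} = (1 + w)/(1 - qw), where N-bar(d,q) is the number of U-irreducible polynomials of degree d. -/

import Mathlib

/-- The map `F̃ : a ↦ a^{-q}` on the multiplicative group of the algebraic closure of
`F = 𝔽_q`. -/
noncomputable def Ftilde (F : Type) [Field F] (q : ℕ) :
    (AlgebraicClosure F)ˣ → (AlgebraicClosure F)ˣ :=
  fun a => (a ^ q)⁻¹

/-- `N̄(d,q)`: the number of U-irreducible polynomials of degree `d`, i.e. the number of
orbits of size `d` of the map `a ↦ a^{-q}` on the multiplicative group of the algebraic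
closure of `𝔽_q`: the number of points of exact period `d`, divided by `d`. -/
noncomputable def Nbar (F : Type) [Field F] (q d : ℕ) : ℕ :=
  Nat.card {a : (AlgebraicClosure F)ˣ //
    (Ftilde F q)^[d] a = a ∧ ∀ m, 0 < m → m < d → (Ftilde F q)^[m] a ≠ a} / d

/-!
`F̃ⁿ` fixes exactly the roots of unity of order `|(-q)ⁿ - 1| = qⁿ - (-1)ⁿ`, an integer prime to
the characteristic, so sorting these points by their minimal period gives
`∑_{d ∣ n} d N̄(d) = qⁿ - (-1)ⁿ`. On the analytic side `-log (1 - w^d) = ∑_k w^{dk} / k`, and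
regrouping the absolutely convergent double series along `n = dk` turns the logarithm of the
product into `∑_n (qⁿ - (-1)ⁿ) wⁿ / n = log (1 + w) - log (1 - q w)`.
-/

open Function Real

namespace Function

variable {α : Type*} (f : α → α)

theorem minimalPeriod_eq_iff_of_pos {d : ℕ} (hd : 0 < d) {x : α} :
    minimalPeriod f x = d ↔ f^[d] x = x ∧ ∀ m, 0 < m → m < d → f^[m] x ≠ x := by
  refine ⟨?_, fun ⟨hper, hmin⟩ => ?_⟩
  · rintro rfl
    exact ⟨iterate_minimalPeriod, fun m hm hmd =>
      not_isPeriodicPt_of_pos_of_lt_minimalPeriod hm.ne' hmd⟩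
  · have hpos : 0 < minimalPeriod f x := IsPeriodicPt.minimalPeriod_pos hd hper
    refine (IsPeriodicPt.minimalPeriod_le hd hper).antisymm (not_lt.mp fun hlt => ?_)
    exact hmin _ hpos hlt iterate_minimalPeriod

/-- `f` permutes the points of minimal period `d`, and every orbit of the cyclic group generated
by this permutation has exactly `d` elements. -/
theorem dvd_natCard_minimalPeriod_eq {d : ℕ} (hd : 0 < d)
    [Finite {x // minimalPeriod f x = d}] :
    d ∣ Nat.card {x // minimalPeriod f x = d} := by
  set P := {x // minimalPeriod f x = d}
  have hper (x : P) : IsPeriodicPt f d x.1 := by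
    simpa only [x.2] using isPeriodicPt_minimalPeriod f x.1
  let g : P → P := fun x => ⟨f x, (minimalPeriod_apply (mk_mem_periodicPts hd (hper x))).trans x.2⟩
  have hg : Injective g := fun x y hxy =>
    Subtype.ext ((hper x).eq_of_apply_eq_same (hper y) hd (congrArg Subtype.val hxy))
  let σ : Equiv.Perm P := Equiv.ofBijective g (Finite.injective_iff_bijective.mp hg)
  have hσ (x : P) : minimalPeriod (σ • ·) x = d := by
    refine (minimalPeriod_eq_minimalPeriod_iff.mpr fun n => ?_).trans x.2
    have hval : Semiconj (Subtype.val : P → α) (σ • ·) f := fun _ => rfl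
    rw [IsPeriodicPt, IsFixedPt, Subtype.ext_iff, (hval.iterate_right n).eq]
    rfl
  let G := Subgroup.zpowers σ
  have horbit (ω : MulAction.orbitRel.Quotient G P) :
      Nat.card (MulAction.orbit G ω.out) = d := by
    rw [Nat.card_congr (MulAction.orbitZPowersEquiv σ ω.out), hσ, Nat.card_zmod]
  have : Fintype (MulAction.orbitRel.Quotient G P) := Fintype.ofFinite _
  rw [Nat.card_congr (MulAction.selfEquivSigmaOrbits G P), Nat.card_sigma]
  simp only [horbit, Finset.sum_const, smul_eq_mul]
  exact Dvd.intro_left _ rfl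

theorem natCard_isPeriodicPt_eq_sum_divisors {n : ℕ} (hn : n ≠ 0)
    [Finite {x // IsPeriodicPt f n x}] :
    Nat.card {x // IsPeriodicPt f n x} =
      ∑ d ∈ n.divisors, Nat.card {x // minimalPeriod f x = d} := by
  have e := Equiv.sigmaSubtypeFiberEquivSubtype (minimalPeriod f)
    (p := IsPeriodicPt f n) (q := (· ∈ n.divisors)) fun x => by
      rw [Nat.mem_divisors, isPeriodicPt_iff_minimalPeriod_dvd]; simp [hn]
  have (d : {d // d ∈ n.divisors}) : Finite {x // minimalPeriod f x = d} :=
    Finite.of_injective (fun x : {x // minimalPeriod f x = d} => e ⟨d, x⟩)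
      (e.injective.comp sigma_mk_injective)
  rw [← Nat.card_congr e, Nat.card_sigma]
  exact Finset.sum_coe_sort n.divisors fun d => Nat.card {x // minimalPeriod f x = d}

theorem sum_divisors_mul_natCard_minimalPeriod_div {n : ℕ} (hn : n ≠ 0)
    [Finite {x // IsPeriodicPt f n x}] :
    ∑ d ∈ n.divisors, d * (Nat.card {x // minimalPeriod f x = d} / d) =
      Nat.card {x // IsPeriodicPt f n x} := by
  rw [natCard_isPeriodicPt_eq_sum_divisors f hn]
  refine Finset.sum_congr rfl fun d hd => Nat.mul_div_cancel' ?_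
  have : Finite {x // minimalPeriod f x = d} := Finite.of_injective _
    (Subtype.impEmbedding (minimalPeriod f · = d) (IsPeriodicPt f n) fun x hx =>
      isPeriodicPt_iff_minimalPeriod_dvd.mpr (hx ▸ Nat.dvd_of_mem_divisors hd)).injective
  exact dvd_natCard_minimalPeriod_eq f (Nat.pos_of_mem_divisors hd)

end Function

theorem AlgebraicClosure.natCard_zpow_eq_one {F : Type*} [Field F] {k : ℤ} (hk : (k : F) ≠ 0) :
    Nat.card {a : (AlgebraicClosure F)ˣ // a ^ k = 1} = k.natAbs := by
  have : NeZero (k.natAbs : F) := ⟨by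
    rcases Int.natAbs_eq k with h | h <;> rw [h] at hk <;> push_cast at hk <;> simpa using hk⟩
  have : NeZero k.natAbs := .of_neZero_natCast F
  rw [← HasEnoughRootsOfUnity.natCard_rootsOfUnity (AlgebraicClosure F) k.natAbs]
  refine Nat.card_congr (Equiv.subtypeEquivRight fun a => ?_)
  rw [mem_rootsOfUnity, ← orderOf_dvd_iff_zpow_eq_one, ← orderOf_dvd_iff_pow_eq_one,
    Int.natCast_dvd]

theorem Ftilde_iterate_apply (F : Type) [Field F] (q n : ℕ) (a : (AlgebraicClosure F)ˣ) :
    (Ftilde F q)^[n] a = a ^ ((-q : ℤ) ^ n) := by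
  induction n with
  | zero => simp
  | succ n ih =>
    rw [iterate_succ_apply', ih, Ftilde, ← zpow_natCast, ← zpow_mul, ← zpow_neg, pow_succ]
    ring_nf

theorem isPeriodicPt_Ftilde_iff (F : Type) [Field F] (q n : ℕ) (a : (AlgebraicClosure F)ˣ) :
    IsPeriodicPt (Ftilde F q) n a ↔ a ^ ((-q : ℤ) ^ n - 1) = 1 := by
  rw [IsPeriodicPt, IsFixedPt, Ftilde_iterate_apply, zpow_sub_one, mul_inv_eq_one]

theorem natCard_isPeriodicPt_Ftilde (F : Type) [Field F] [Fintype F] {n : ℕ} (hn : n ≠ 0) :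
    Nat.card {a // IsPeriodicPt (Ftilde F (Fintype.card F)) n a} =
      ((-(Fintype.card F : ℤ)) ^ n - 1).natAbs := by
  simp_rw [isPeriodicPt_Ftilde_iff]
  refine AlgebraicClosure.natCard_zpow_eq_one ?_
  simp [hn]

theorem abs_neg_pow_sub_one {R : Type*} [CommRing R] [LinearOrder R] [IsStrictOrderedRing R]
    {x : R} (hx : 1 ≤ x) (n : ℕ) : |(-x) ^ n - 1| = x ^ n - (-1) ^ n := by
  have hxn : 1 ≤ x ^ n := one_le_pow₀ hx
  rcases n.even_or_odd with h | h
  · rw [h.neg_pow, h.neg_one_pow, abs_of_nonneg (by linarith)]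
  · rw [h.neg_pow, h.neg_one_pow, abs_of_nonpos (by linarith)]
    ring

theorem sum_divisors_mul_Nbar (F : Type) [Field F] [Fintype F] {n : ℕ} (hn : n ≠ 0) :
    (∑ d ∈ n.divisors, d * Nbar F (Fintype.card F) d : ℤ) =
      (Fintype.card F : ℤ) ^ n - (-1) ^ n := by
  set f := Ftilde F (Fintype.card F)
  have hcard := natCard_isPeriodicPt_Ftilde F hn
  have : Finite {a // IsPeriodicPt f n a} := Nat.finite_of_card_ne_zero <| by
    rw [hcard, Int.natAbs_ne_zero]
    exact fun h => by simpa [hn] using congrArg (Int.cast : ℤ → F) h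
  have hNbar (d : ℕ) (hd : d ∈ n.divisors) :
      Nbar F (Fintype.card F) d = Nat.card {a // minimalPeriod f a = d} / d := by
    rw [Nbar, Nat.card_congr (Equiv.subtypeEquivRight fun a =>
      (minimalPeriod_eq_iff_of_pos f (Nat.pos_of_mem_divisors hd)).symm)]
  rw [← abs_neg_pow_sub_one (by exact_mod_cast Fintype.card_pos), ← Int.natCast_natAbs,
    ← hcard, ← sum_divisors_mul_natCard_minimalPeriod_div f hn, Nat.cast_sum]
  exact Finset.sum_congr rfl fun d hd => by rw [hNbar d hd, Nat.cast_mul]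

theorem Real.hasSum_pnat_pow_div_log {x : ℝ} (h : |x| < 1) :
    HasSum (fun n : ℕ+ => x ^ (n : ℕ) / n) (-log (1 - x)) := by
  rw [hasSum_pnat_iff_hasSum_succ (f := fun n : ℕ => x ^ n / n)]
  exact_mod_cast hasSum_pow_div_log_of_abs_lt_one h

theorem sum_divisorsAntidiagonal_mul_pow_div (a : ℕ → ℝ) (x : ℝ) {n : ℕ} (hn : n ≠ 0) :
    ∑ p ∈ n.divisorsAntidiagonal, a p.1 * (x ^ p.1) ^ p.2 / p.2 =
      (∑ d ∈ n.divisors, d * a d) * x ^ n / n := by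
  rw [Nat.sum_divisorsAntidiagonal (fun d k => a d * (x ^ d) ^ k / k), Finset.sum_mul,
    Finset.sum_div]
  refine Finset.sum_congr rfl fun d hd => ?_
  obtain ⟨k, rfl⟩ := Nat.dvd_of_mem_divisors hd
  have hd0 : d ≠ 0 := left_ne_zero_of_mul hn
  have hk0 : k ≠ 0 := right_ne_zero_of_mul hn
  rw [Nat.mul_div_cancel_left k (Nat.pos_of_ne_zero hd0), ← pow_mul]
  push_cast
  field_simp

theorem hasSum_mul_neg_log_one_sub_pow {a : ℕ → ℝ} (ha : ∀ n, 0 ≤ a n) {w : ℝ} (hw : |w| < 1)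
    (hs : Summable fun n : ℕ+ => (∑ d ∈ (n : ℕ).divisors, d * a d) * |w| ^ (n : ℕ) / n) :
    HasSum (fun d : ℕ+ => a d * -log (1 - w ^ (d : ℕ)))
      (∑' n : ℕ+, (∑ d ∈ (n : ℕ).divisors, d * a d) * w ^ (n : ℕ) / n) := by
  set g : ℕ+ × ℕ+ → ℝ := fun p => a p.1 * (w ^ (p.1 : ℕ)) ^ (p.2 : ℕ) / p.2
  have hfiber (x : ℝ) (n : ℕ+) :
      ∑ p : (n : ℕ).divisorsAntidiagonal, a p.1.1 * (x ^ p.1.1) ^ p.1.2 / p.1.2 =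
        (∑ d ∈ (n : ℕ).divisors, d * a d) * x ^ (n : ℕ) / n := by
    rw [Finset.sum_coe_sort _ (fun p : ℕ × ℕ => a p.1 * (x ^ p.1) ^ p.2 / p.2),
      sum_divisorsAntidiagonal_mul_pow_div a x n.ne_zero]
  have hg : Summable g := by
    rw [← sigmaAntidiagonalEquivProd.summable_iff]
    refine Summable.of_norm ?_
    rw [summable_sigma_of_nonneg fun _ => norm_nonneg _]
    refine ⟨fun _ => (hasSum_fintype _).summable, hs.congr fun n => ?_⟩
    rw [tsum_fintype, ← hfiber]
    refine Finset.sum_congr rfl fun p _ => ?_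
    simp [g, sigmaAntidiagonalEquivProd, divisorsAntidiagonalFactors, abs_of_nonneg (ha _)]
  have hrow (d : ℕ+) : HasSum (fun k : ℕ+ => g (d, k)) (a d * -log (1 - w ^ (d : ℕ))) := by
    have hwd : |w ^ (d : ℕ)| < 1 := by
      rw [abs_pow]; exact pow_lt_one₀ (abs_nonneg w) hw d.ne_zero
    simpa only [g, mul_div_assoc] using (Real.hasSum_pnat_pow_div_log hwd).mul_left (a d)
  convert hg.hasSum.prod_fiberwise hrow using 1
  have hg' : Summable fun c => g (sigmaAntidiagonalEquivProd c) :=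
    sigmaAntidiagonalEquivProd.summable_iff.mpr hg
  rw [← sigmaAntidiagonalEquivProd.tsum_eq, hg'.tsum_sigma]
  refine tsum_congr fun n => ?_
  rw [tsum_fintype, ← hfiber]
  rfl

theorem hasProd_one_sub_pow_zpow_neg {a : ℕ → ℕ} {w : ℝ} (hw : |w| < 1)
    (hs : Summable fun n : ℕ+ => (∑ d ∈ (n : ℕ).divisors, (d * a d : ℝ)) * |w| ^ (n : ℕ) / n) :
    HasProd (fun d : ℕ+ => (1 - w ^ (d : ℕ)) ^ (-(a d : ℤ)))
      (exp (∑' n : ℕ+, (∑ d ∈ (n : ℕ).divisors, (d * a d : ℝ)) * w ^ (n : ℕ) / n)) := by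
  have hpos (d : ℕ+) : 0 < 1 - w ^ (d : ℕ) := by
    have := pow_lt_one₀ (abs_nonneg w) hw d.ne_zero
    rw [← abs_pow] at this
    linarith [le_abs_self (w ^ (d : ℕ))]
  refine Real.hasProd_of_hasSum_log (fun d => zpow_pos (hpos d) _) ?_
  convert hasSum_mul_neg_log_one_sub_pow (fun n => (a n).cast_nonneg) hw hs using 2 with d
  rw [Real.log_zpow]
  push_cast
  ring

theorem hasSum_pow_sub_neg_one_pow_mul_pow_div {c x : ℝ} (hcx : |c * x| < 1) (hx : |x| < 1) :
    HasSum (fun n : ℕ+ => (c ^ (n : ℕ) - (-1) ^ (n : ℕ)) * x ^ (n : ℕ) / n)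
      (log (1 + x) - log (1 - c * x)) := by
  have h := (Real.hasSum_pnat_pow_div_log hcx).sub
    (Real.hasSum_pnat_pow_div_log (x := -x) (by rwa [abs_neg]))
  rw [neg_sub_neg, sub_neg_eq_add] at h
  refine h.congr_fun fun n => ?_
  rw [mul_pow, neg_pow]
  ring

/-- The identity `∏_{d ≥ 1} (1 - w^d)^{-N̄(d,q)} = (1 + w)/(1 - qw)`, stated as a
convergent identity of real numbers for `q·|w| < 1` (which determines the underlying
formal power series identity in `w`). -/
theorem prod_Nbar (F : Type) [Field F] [Fintype F] (q : ℕ)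
    (hq : Fintype.card F = q) (w : ℝ) (hw : (q : ℝ) * |w| < 1) :
    ∏' d : ℕ, (1 - w ^ (d + 1)) ^ (-(Nbar F q (d + 1) : ℤ)) =
      (1 + w) / (1 - q * w) := by
  subst hq
  set q := Fintype.card F
  have hq1 : (1 : ℝ) ≤ q := by exact_mod_cast Fintype.card_pos
  have hw1 : |w| < 1 := lt_of_le_of_lt (le_mul_of_one_le_left (abs_nonneg w) hq1) hw
  have hseries (x : ℝ) (hx : |x| ≤ |w|) :
      HasSum (fun n : ℕ+ => (∑ d ∈ (n : ℕ).divisors, (d * Nbar F q d : ℝ)) * x ^ (n : ℕ) / n)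
        (log (1 + x) - log (1 - q * x)) := by
    have hcount (n : ℕ+) : (∑ d ∈ (n : ℕ).divisors, (d * Nbar F q d : ℝ)) =
        q ^ (n : ℕ) - (-1) ^ (n : ℕ) := by
      exact_mod_cast sum_divisors_mul_Nbar F n.ne_zero
    simp only [hcount]
    refine hasSum_pow_sub_neg_one_pow_mul_pow_div ?_ (hx.trans_lt hw1)
    rw [abs_mul, Nat.abs_cast]
    exact lt_of_le_of_lt (by gcongr) hw
  have h1w : 0 < 1 + w := by linarith [neg_abs_le w]
  have h1qw : 0 < 1 - q * w := by nlinarith [le_abs_self w]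
  rw [← tprod_pnat_eq_tprod_succ (f := fun d => (1 - w ^ d) ^ (-(Nbar F q d : ℤ))),
    (hasProd_one_sub_pow_zpow_neg hw1 (hseries |w| (abs_abs w).le).summable).tprod_eq,
    (hseries w le_rfl).tsum_eq, exp_sub, exp_log h1w, exp_log h1qw]
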